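/- arXiv:2205.09378 — 2 statements merged into one kernel-verified Lean document; each statement's English description precedes it below -/
import Mathlib

section
/- Consider a two-user single-hop Gaussian interference channel with direct channel power gains a₁, a₂ > 0, cross-channel power gains b₁₂, b₂₁ ≥ 0, and noise power σ² > 0, where for transmit powers p₁, p₂ ≥ 0 the SINRs are γ₁(p₁,p₂) = a₁p₁/(σ² + b₂₁p₂) and γ₂(p₁,p₂) = a₂p₂/(σ² + b₁₂p₁). Let P > 0 and F(p₁,p₂) = (1 + γ₁(p₁,p₂))·(1 + γ₂(p₁,p₂)). Then there exists (p₁*, p₂*) ∈ {0,P} × {0,P} such that F(p₁,p₂) ≤ F(p₁*, p₂*) for all (p₁,p₂) ∈ [0,P] × [0,P]; that is, binary power allocation is optimal for maximizing the product (1+γ₁)(1+γ₂) over the power box. -/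
/-!
With the other user's power fixed, `F` has the shape `x ↦ (1 + c x)(1 + d / (e + b x))` with
`b, c ≥ 0`, `e > 0`. Such a function is quasiconvex on `x ≥ 0`: it is nondecreasing when
`d (b - c e) ≤ 0` and convex otherwise. A function on a square that is quasiconvex in each
variable separately is bounded by its value at one of the four corners.
-/

open Set

section Slice

variable {𝕜 : Type*} [Field 𝕜] [LinearOrder 𝕜] [IsStrictOrderedRing 𝕜] {b c d e : 𝕜}

theorem monotoneOn_one_add_mul_mul_one_add_div (hb : 0 ≤ b) (hc : 0 ≤ c) (he : 0 < e)
    (h : d * (b - c * e) ≤ 0) :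
    MonotoneOn (fun x => (1 + c * x) * (1 + d / (e + b * x))) (Ici 0) := by
  intro x (hx : 0 ≤ x) y (hy : 0 ≤ y) hxy
  have hex : 0 < e + b * x := by positivity
  have hey : 0 < e + b * y := by positivity
  have key : (1 + c * y) * (1 + d / (e + b * y)) - (1 + c * x) * (1 + d / (e + b * x)) =
      (y - x) * (c * ((e + b * x) * (e + b * y)) - d * (b - c * e)) /
        ((e + b * x) * (e + b * y)) := by
    field_simp
    ring
  have : 0 ≤ (y - x) * (c * ((e + b * x) * (e + b * y)) - d * (b - c * e)) /
      ((e + b * x) * (e + b * y)) := by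
    apply div_nonneg (mul_nonneg (sub_nonneg.2 hxy) ?_) (by positivity)
    nlinarith [mul_nonneg hc (mul_pos hex hey).le]
  simp only
  linarith

theorem convexOn_one_add_mul_mul_one_add_div (hb : 0 ≤ b) (he : 0 < e)
    (h : 0 ≤ d * (b - c * e)) :
    ConvexOn 𝕜 (Ici 0) (fun x => (1 + c * x) * (1 + d / (e + b * x))) := by
  refine ⟨convex_Ici 0, fun x (hx : 0 ≤ x) y (hy : 0 ≤ y) α β hα hβ hαβ => ?_⟩
  obtain rfl : β = 1 - α := by linear_combination hαβ
  have hex : 0 < e + b * x := by positivity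
  have hey : 0 < e + b * y := by positivity
  have hez : 0 < e + b * (α * x + (1 - α) * y) := by positivity
  have key : α * ((1 + c * x) * (1 + d / (e + b * x))) +
        (1 - α) * ((1 + c * y) * (1 + d / (e + b * y))) -
        (1 + c * (α * x + (1 - α) * y)) * (1 + d / (e + b * (α * x + (1 - α) * y))) =
      d * (b - c * e) * (α * (1 - α) * b * (x - y) ^ 2) /
        ((e + b * x) * (e + b * y) * (e + b * (α * x + (1 - α) * y))) := by
    field_simp
    ring
  have : 0 ≤ d * (b - c * e) * (α * (1 - α) * b * (x - y) ^ 2) /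
      ((e + b * x) * (e + b * y) * (e + b * (α * x + (1 - α) * y))) :=
    div_nonneg (mul_nonneg h (by positivity)) (by positivity)
  simp only [smul_eq_mul]
  linarith

theorem quasiconvexOn_one_add_mul_mul_one_add_div (hb : 0 ≤ b) (hc : 0 ≤ c) (he : 0 < e) :
    QuasiconvexOn 𝕜 (Ici 0) (fun x => (1 + c * x) * (1 + d / (e + b * x))) := by
  rcases le_total (d * (b - c * e)) 0 with h | h
  · exact (monotoneOn_one_add_mul_mul_one_add_div hb hc he h).quasiconvexOn (convex_Ici 0)
  · exact (convexOn_one_add_mul_mul_one_add_div hb he h).quasiconvexOn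

end Slice

section Corner

variable {𝕜 β : Type*} [Field 𝕜] [LinearOrder 𝕜] [IsStrictOrderedRing 𝕜] [LinearOrder β]

theorem QuasiconvexOn.le_max_of_mem_Icc {s : Set 𝕜} {f : 𝕜 → β} {a b x : 𝕜}
    (hf : QuasiconvexOn 𝕜 s f) (ha : a ∈ s) (hb : b ∈ s) (hx : x ∈ Icc a b) :
    f x ≤ max (f a) (f b) := by
  have hseg := (hf (max (f a) (f b))).segment_subset ⟨ha, le_max_left _ _⟩ ⟨hb, le_max_right _ _⟩
  exact (hseg (segment_eq_Icc (hx.1.trans hx.2) ▸ hx)).2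

theorem exists_corner_forall_le_of_quasiconvexOn {F : 𝕜 → 𝕜 → β} {a b : 𝕜}
    (h₁ : ∀ q ∈ Icc a b, QuasiconvexOn 𝕜 (Icc a b) (F · q))
    (h₂ : ∀ p ∈ Icc a b, QuasiconvexOn 𝕜 (Icc a b) (F p ·)) :
    ∃ x ∈ ({a, b} : Set 𝕜), ∃ y ∈ ({a, b} : Set 𝕜),
      ∀ p ∈ Icc a b, ∀ q ∈ Icc a b, F p q ≤ F x y := by
  obtain ⟨⟨x, y⟩, ⟨hx, hy⟩, hmax⟩ := ({a, b} ×ˢ {a, b} : Set (𝕜 × 𝕜)).exists_max_image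
    (Function.uncurry F) (toFinite _) ⟨(a, a), by simp⟩
  have hcorner {p q : 𝕜} (hp : p ∈ ({a, b} : Set 𝕜)) (hq : q ∈ ({a, b} : Set 𝕜)) :
      F p q ≤ F x y :=
    hmax (p, q) ⟨hp, hq⟩
  refine ⟨x, hx, y, hy, fun p hp q hq => ?_⟩
  have hab : a ≤ b := hp.1.trans hp.2
  have ha : a ∈ Icc a b := left_mem_Icc.2 hab
  have hb : b ∈ Icc a b := right_mem_Icc.2 hab
  have ha' : a ∈ ({a, b} : Set 𝕜) := mem_insert a {b}
  have hb' : b ∈ ({a, b} : Set 𝕜) := mem_insert_of_mem a rfl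
  calc F p q ≤ max (F a q) (F b q) := (h₁ q hq).le_max_of_mem_Icc ha hb hp
    _ ≤ max (max (F a a) (F a b)) (max (F b a) (F b b)) :=
      max_le_max ((h₂ a ha).le_max_of_mem_Icc ha hb hq) ((h₂ b hb).le_max_of_mem_Icc ha hb hq)
    _ ≤ F x y := max_le (max_le (hcorner ha' ha') (hcorner ha' hb'))
      (max_le (hcorner hb' ha') (hcorner hb' hb'))

end Corner

theorem binary_power_allocation_optimal_single_hop_general
    (a1 a2 b12 b21 σ2 P : ℝ)
    (ha1 : 0 < a1) (ha2 : 0 < a2) (hb12 : 0 ≤ b12) (hb21 : 0 ≤ b21)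
    (hσ2 : 0 < σ2) :
    ∃ p1s ∈ ({0, P} : Set ℝ), ∃ p2s ∈ ({0, P} : Set ℝ),
      ∀ p1 ∈ Set.Icc (0 : ℝ) P, ∀ p2 ∈ Set.Icc (0 : ℝ) P,
        (1 + a1 * p1 / (σ2 + b21 * p2)) * (1 + a2 * p2 / (σ2 + b12 * p1)) ≤
          (1 + a1 * p1s / (σ2 + b21 * p2s)) * (1 + a2 * p2s / (σ2 + b12 * p1s)) := by
  apply exists_corner_forall_le_of_quasiconvexOn
  · rintro p2 ⟨hp2, -⟩
    refine (convex_Icc 0 P).quasiconvexOn_restrict ?_ Icc_subset_Ici_self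
    convert quasiconvexOn_one_add_mul_mul_one_add_div (d := a2 * p2) hb12
      (div_nonneg ha1.le (by positivity : 0 ≤ σ2 + b21 * p2)) hσ2 using 1
    funext p1
    rw [mul_div_right_comm]
  · rintro p1 ⟨hp1, -⟩
    refine (convex_Icc 0 P).quasiconvexOn_restrict ?_ Icc_subset_Ici_self
    convert quasiconvexOn_one_add_mul_mul_one_add_div (d := a1 * p1) hb21
      (div_nonneg ha2.le (by positivity : 0 ≤ σ2 + b12 * p1)) hσ2 using 1
    funext p2
    rw [mul_comm, mul_div_right_comm]

/-- **Binary power allocation is optimal in the single-hop case.**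
In a two-user single-hop Gaussian interference channel with direct gains
`a₁, a₂ > 0`, cross gains `b₁₂, b₂₁ ≥ 0` and noise `σ² > 0`, the product
`F(p₁,p₂) = (1 + a₁p₁/(σ² + b₂₁p₂))·(1 + a₂p₂/(σ² + b₁₂p₁))` attains its
maximum over the box `[0,P]²` at a corner `(p₁*, p₂*) ∈ {0,P}²`. -/
theorem binary_power_allocation_optimal_single_hop
    (a1 a2 b12 b21 σ2 P : ℝ)
    (ha1 : 0 < a1) (ha2 : 0 < a2) (hb12 : 0 ≤ b12) (hb21 : 0 ≤ b21)
    (hσ2 : 0 < σ2) (hP : 0 < P) :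
    ∃ p1s ∈ ({0, P} : Set ℝ), ∃ p2s ∈ ({0, P} : Set ℝ),
      ∀ p1 ∈ Set.Icc (0 : ℝ) P, ∀ p2 ∈ Set.Icc (0 : ℝ) P,
        (1 + a1 * p1 / (σ2 + b21 * p2)) * (1 + a2 * p2 / (σ2 + b12 * p1)) ≤
          (1 + a1 * p1s / (σ2 + b21 * p2s)) * (1 + a2 * p2s / (σ2 + b12 * p1s)) :=
  binary_power_allocation_optimal_single_hop_general a1 a2 b12 b21 σ2 P ha1 ha2 hb12 hb21 hσ2
end

section
/- Consider a two-user decode-and-forward relay network with L ≥ 1 hops and a fixed relay assignment. For i ∈ {1,2} and l ∈ {0,…,L−1}, user i transmits in hop l with power pᵢ(l) ∈ [0,P], where P > 0. For l ∈ {1,…,L}, with direct channel power gains hᵢ(l) > 0, cross-channel power gains g_{ji}(l) ≥ 0 (j ≠ i), and noise power σ² > 0, the SINR of user i in hop l is γᵢ(l) = pᵢ(l−1)·hᵢ(l)/(σ² + p_j(l−1)·g_{ji}(l)), and the achievable sum-rate is R(p₁,p₂) = log₂(1 + min_{1≤l≤L} γ₁(l)) + log₂(1 + min_{1≤l≤L}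 γ₂(l)). Then the supremum of R over all allocations in [0,P]^L × [0,P]^L equals the supremum of log₂((1 + γ₁(1))·(1 + γ₂(1))) over those allocations in [0,P]^L × [0,P]^L that additionally satisfy the equal per-hop SINR constraints γ₁(l) = γ₁(1) and γ₂(l) = γ₂(1) for all l ∈ {1,…,L}. -/
/-!
The sum-rate only sees the bottleneck SINRs `aᵢ = minₗ γᵢ(l)`. In every hop the powers can be
lowered until both SINRs equal `(a₁, a₂)` exactly: the target powers solve a `2 × 2` linear system
whose matrix is an M-matrix as soon as some allocation reaches SINRs at least `(a₁, a₂)`, and its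
nonnegative solution lies below every such allocation. The lowered allocation stays in the box,
has equal SINRs across hops and the same sum-rate, so the two sets of values coincide.
-/

/-- SINR of user `i ∈ {0,1}` in hop `l` of a two-user multi-hop network:
`γᵢ(l) = pᵢ(l)·hᵢ(l)/(σ² + p_j(l)·g_{ji}(l))` where `j = i+1` is the other
user, `hᵢ(l)` is user `i`'s direct channel power gain in hop `l`, and `gᵢ(l)`
is the cross-channel power gain into user `i`'s receiver in hop `l`
(hops indexed so that `p(·,l)` is the transmit power used in hop `l+1`). -/
noncomputable def twoUserSINR (L : ℕ) (σ2 : ℝ) (h g : Fin 2 → Fin L → ℝ)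
    (p : Fin 2 → Fin L → ℝ) (i : Fin 2) (l : Fin L) : ℝ :=
  p i l * h i l / (σ2 + p (i + 1) l * g i l)

/-- Achievable sum-rate of the two-user decode-and-forward network:
`R(p) = Σᵢ log₂(1 + min over hops of γᵢ(l))`. -/
noncomputable def twoUserSumRate (L : ℕ) (σ2 : ℝ) (h g : Fin 2 → Fin L → ℝ)
    (p : Fin 2 → Fin L → ℝ) : ℝ :=
  ∑ i, Real.logb 2 (1 + ⨅ l, twoUserSINR L σ2 h g p i l)

section SingleHop

variable {σ h₁ h₂ g₁ g₂ p₁ p₂ a₁ a₂ : ℝ}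

theorem exists_sinr_eq_of_sinr_ge (hσ : 0 < σ) (hh₁ : 0 < h₁) (hh₂ : 0 < h₂)
    (hg₁ : 0 ≤ g₁) (hg₂ : 0 ≤ g₂) (hp₁ : 0 ≤ p₁) (ha₁ : 0 ≤ a₁) (ha₂ : 0 ≤ a₂)
    (H₁ : a₁ * (σ + p₂ * g₁) ≤ p₁ * h₁) (H₂ : a₂ * (σ + p₁ * g₂) ≤ p₂ * h₂) :
    ∃ x y, 0 ≤ x ∧ x ≤ p₁ ∧ 0 ≤ y ∧ y ≤ p₂ ∧
      x * h₁ = a₁ * (σ + y * g₁) ∧ y * h₂ = a₂ * (σ + x * g₂) := by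
  set D := h₁ * h₂ - a₁ * a₂ * g₁ * g₂
  set c := a₁ * σ * (h₂ + a₂ * g₁)
  -- substitute the second constraint into the first one
  have hcD : c ≤ p₁ * D := by
    nlinarith [mul_le_mul_of_nonneg_right H₁ hh₂.le,
      mul_le_mul_of_nonneg_left H₂ (mul_nonneg ha₁ hg₁)]
  have hD : 0 < D := by
    rcases ha₁.eq_or_lt with rfl | ha₁
    · simpa [D] using mul_pos hh₁ hh₂
    · have hc_pos : 0 < c := by positivity
      exact pos_of_mul_pos_right (hc_pos.trans_le hcD) hp₁
  set x := c / D
  set y := a₂ * (σ + x * g₂) / h₂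
  have hx : 0 ≤ x := by positivity
  have hxp : x ≤ p₁ := (div_le_iff₀ hD).2 hcD
  refine ⟨x, y, hx, hxp, by positivity, ?_, ?_, ?_⟩
  · rw [div_le_iff₀ hh₂]
    nlinarith [mul_le_mul_of_nonneg_right hxp hg₂]
  · have hxD : x * D = c := div_mul_cancel₀ c hD.ne'
    simp only [y, D, c] at hxD ⊢
    field_simp
    linear_combination hxD
  · simp only [y]
    field_simp

end SingleHop

section TwoUserNetwork

variable {L : ℕ} {σ2 : ℝ} {h g p : Fin 2 → Fin L → ℝ}

theorem twoUserSINR_nonneg (hσ2 : 0 ≤ σ2) (hh : ∀ i l, 0 ≤ h i l) (hg : ∀ i l, 0 ≤ g i l)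
    (hp : ∀ i l, 0 ≤ p i l) (i : Fin 2) (l : Fin L) : 0 ≤ twoUserSINR L σ2 h g p i l :=
  div_nonneg (mul_nonneg (hp i l) (hh i l)) (add_nonneg hσ2 (mul_nonneg (hp _ l) (hg i l)))

theorem le_twoUserSINR_iff (hσ2 : 0 < σ2) (hg : ∀ i l, 0 ≤ g i l) (hp : ∀ i l, 0 ≤ p i l)
    (a : ℝ) (i : Fin 2) (l : Fin L) :
    a ≤ twoUserSINR L σ2 h g p i l ↔ a * (σ2 + p (i + 1) l * g i l) ≤ p i l * h i l :=
  le_div_iff₀ (add_pos_of_pos_of_nonneg hσ2 (mul_nonneg (hp _ l) (hg i l)))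

theorem twoUserSINR_eq_iff (hσ2 : 0 < σ2) (hg : ∀ i l, 0 ≤ g i l) (hp : ∀ i l, 0 ≤ p i l)
    {a : ℝ} {i : Fin 2} {l : Fin L} :
    twoUserSINR L σ2 h g p i l = a ↔ p i l * h i l = a * (σ2 + p (i + 1) l * g i l) :=
  div_eq_iff (add_pos_of_pos_of_nonneg hσ2 (mul_nonneg (hp _ l) (hg i l))).ne'

theorem exists_le_twoUserSINR_eq_iInf (hσ2 : 0 < σ2) (hh : ∀ i l, 0 < h i l)
    (hg : ∀ i l, 0 ≤ g i l) (hp : ∀ i l, 0 ≤ p i l) :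
    ∃ q : Fin 2 → Fin L → ℝ, (∀ i l, 0 ≤ q i l ∧ q i l ≤ p i l) ∧
      ∀ i l, twoUserSINR L σ2 h g q i l = ⨅ l', twoUserSINR L σ2 h g p i l' := by
  set a : Fin 2 → ℝ := fun i => ⨅ l', twoUserSINR L σ2 h g p i l'
  have ha : ∀ i, 0 ≤ a i := fun i =>
    Real.iInf_nonneg (twoUserSINR_nonneg hσ2.le (fun i l => (hh i l).le) hg hp i)
  have hle : ∀ i l, a i * (σ2 + p (i + 1) l * g i l) ≤ p i l * h i l := fun i l =>
    (le_twoUserSINR_iff hσ2 hg hp _ i l).1 (ciInf_le (Set.finite_range _).bddBelow l)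
  have hop : ∀ l, ∃ x y, 0 ≤ x ∧ x ≤ p 0 l ∧ 0 ≤ y ∧ y ≤ p 1 l ∧
      x * h 0 l = a 0 * (σ2 + y * g 0 l) ∧ y * h 1 l = a 1 * (σ2 + x * g 1 l) := fun l =>
    exists_sinr_eq_of_sinr_ge hσ2 (hh 0 l) (hh 1 l) (hg 0 l) (hg 1 l) (hp 0 l)
      (ha 0) (ha 1) (hle 0 l) (hle 1 l)
  choose x y hx hxp hy hyp hx_eq hy_eq using hop
  have hq : ∀ i l, 0 ≤ ![x, y] i l ∧ ![x, y] i l ≤ p i l := by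
    intro i l
    fin_cases i
    exacts [⟨hx l, hxp l⟩, ⟨hy l, hyp l⟩]
  refine ⟨![x, y], hq, fun i l => ?_⟩
  rw [twoUserSINR_eq_iff hσ2 hg (fun i l => (hq i l).1)]
  fin_cases i
  exacts [hx_eq l, hy_eq l]

theorem twoUserSumRate_eq_logb_mul (l₀ : Fin L) (hγ : ∀ i, 0 ≤ twoUserSINR L σ2 h g p i l₀)
    (hconst : ∀ i l, twoUserSINR L σ2 h g p i l = twoUserSINR L σ2 h g p i l₀) :
    twoUserSumRate L σ2 h g p =
      Real.logb 2 ((1 + twoUserSINR L σ2 h g p 0 l₀) * (1 + twoUserSINR L σ2 h g p 1 l₀)) := by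
  have : Nonempty (Fin L) := ⟨l₀⟩
  rw [Real.logb_mul (by linarith [hγ 0]) (by linarith [hγ 1])]
  simp only [twoUserSumRate, hconst _ _, ciInf_const, Fin.sum_univ_two]

end TwoUserNetwork

theorem sumRate_sup_eq_equalSINR_sup_general
    (L : ℕ) (hL : 1 ≤ L) (σ2 P : ℝ) (hσ2 : 0 < σ2)
    (h g : Fin 2 → Fin L → ℝ)
    (hh : ∀ i l, 0 < h i l) (hg : ∀ i l, 0 ≤ g i l) :
    sSup (twoUserSumRate L σ2 h g ''
        {p | ∀ i l, p i l ∈ Set.Icc (0 : ℝ) P}) =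
    sSup ((fun p => Real.logb 2
          ((1 + twoUserSINR L σ2 h g p 0 ⟨0, hL⟩) *
           (1 + twoUserSINR L σ2 h g p 1 ⟨0, hL⟩))) ''
        {p | (∀ i l, p i l ∈ Set.Icc (0 : ℝ) P) ∧
          (∀ i l, twoUserSINR L σ2 h g p i l =
            twoUserSINR L σ2 h g p i ⟨0, hL⟩)}) := by
  have hγ : ∀ p : Fin 2 → Fin L → ℝ, (∀ i l, 0 ≤ p i l) → ∀ i l,
      0 ≤ twoUserSINR L σ2 h g p i l :=
    fun p => twoUserSINR_nonneg hσ2.le (fun i l => (hh i l).le) hg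
  congr 1
  ext r
  constructor
  · rintro ⟨p, hp, rfl⟩
    obtain ⟨q, hqp, hq⟩ := exists_le_twoUserSINR_eq_iInf hσ2 hh hg fun i l => (hp i l).1
    have hq_box : ∀ i l, q i l ∈ Set.Icc 0 P := fun i l =>
      ⟨(hqp i l).1, (hqp i l).2.trans (hp i l).2⟩
    have hq_const : ∀ i l, twoUserSINR L σ2 h g q i l = twoUserSINR L σ2 h g q i ⟨0, hL⟩ :=
      fun i l => by rw [hq, hq]
    refine ⟨q, ⟨hq_box, hq_const⟩, ?_⟩
    dsimp only
    rw [← twoUserSumRate_eq_logb_mul _ (hγ q (fun i l => (hq_box i l).1) · _) hq_const]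
    have : Nonempty (Fin L) := ⟨⟨0, hL⟩⟩
    simp only [twoUserSumRate, hq, ciInf_const]
  · rintro ⟨p, ⟨hp, hp_const⟩, rfl⟩
    exact ⟨p, hp, twoUserSumRate_eq_logb_mul _ (hγ p (fun i l => (hp i l).1) · _) hp_const⟩

/-- **SINR-matching reformulation (equation (11)).**
In a two-user decode-and-forward network with `L ≥ 1` hops, positive direct
gains, nonnegative cross gains, `σ² > 0` and `P > 0`, the supremum of the
achievable sum-rate over the power box `[0,P]^{2×L}` equals the supremum of
`log₂((1 + γ₁(1))·(1 + γ₂(1)))` over those allocations in the box whose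
per-hop SINRs are equal across all hops for each user. -/
theorem sumRate_sup_eq_equalSINR_sup
    (L : ℕ) (hL : 1 ≤ L) (σ2 P : ℝ) (hσ2 : 0 < σ2) (hP : 0 < P)
    (h g : Fin 2 → Fin L → ℝ)
    (hh : ∀ i l, 0 < h i l) (hg : ∀ i l, 0 ≤ g i l) :
    sSup (twoUserSumRate L σ2 h g ''
        {p | ∀ i l, p i l ∈ Set.Icc (0 : ℝ) P}) =
    sSup ((fun p => Real.logb 2
          ((1 + twoUserSINR L σ2 h g p 0 ⟨0, hL⟩) *
           (1 + twoUserSINR L σ2 h g p 1 ⟨0, hL⟩))) ''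
        {p | (∀ i l, p i l ∈ Set.Icc (0 : ℝ) P) ∧
          (∀ i l, twoUserSINR L σ2 h g p i l =
            twoUserSINR L σ2 h g p i ⟨0, hL⟩)}) :=
  sumRate_sup_eq_equalSINR_sup_general L hL σ2 P hσ2 h g hh hg
end
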